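/- Let $V$ be a finite-dimensional real inner product space, $R \subset V \setminus \{0\}$ a finite set, and $R^+ \subseteq R$ with $R$ the disjoint union of $R^+$ and $-R^+$. Let $\lambda \in V$ satisfy $\langle \beta, \lambda \rangle \geq 0$ for all $\beta \in R^+$, and suppose there is a function $m : R^+ \to \mathbb{N}$ with $m(\alpha) \cdot \langle \alpha, \alpha \rangle = 2 \langle \alpha, \lambda \rangle$ for every $\alpha \in R^+$. Let $w : V \to V$ be a linear isometry with $w(R) = R$ and $w(\lambda) = \lambda$. Then for every map $q$ from $R$ to a commutative monoid $M$, one has $\prod_{\alpha \in R^+} q(w(\alpha))^{m(\alpha)} = \prod_{\alpha \in R^+} q(\alpha)^{m(\alpha)}$. -/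

import Mathlib

open scoped RealInnerProductSpace

/-!
A root `α ∈ R⁺` with `m(α) ≠ 0` satisfies `⟨α, λ⟩ > 0`. Since `w` fixes `λ`, also
`⟨wα, λ⟩ > 0`, so `wα ∈ R` cannot be a negative root: `wα ∈ R⁺`, and as `w` preserves
`⟨α, α⟩` and `⟨α, λ⟩` it preserves the multiplicity. Hence `w` permutes the roots of nonzero
multiplicity, and the factors with `m(α) = 0` are trivial.
-/

theorem Finset.prod_comp_pow_eq_of_mapsTo {ι M : Type*} [CommMonoid M] (s : Finset ι)
    (m : ι → ℕ) (f : ι → ι) (q : ι → M) (hf : Set.InjOn f {x | x ∈ s ∧ m x ≠ 0})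
    (hmaps : ∀ x ∈ s, m x ≠ 0 → f x ∈ s ∧ m (f x) = m x) :
    ∏ x ∈ s, q (f x) ^ m x = ∏ x ∈ s, q x ^ m x := by
  classical
  set S := s.filter (m · ≠ 0)
  have hsupp : ∀ g : ι → M, ∏ x ∈ S, g x ^ m x = ∏ x ∈ s, g x ^ m x := fun g =>
    Finset.prod_filter_of_ne fun x _ hx hm => hx (by rw [hm, pow_zero])
  have hS : (S : Set ι) = {x | x ∈ s ∧ m x ≠ 0} := Finset.coe_filter _ _
  have hmapsTo : Set.MapsTo f S S := fun x hx => by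
    obtain ⟨hxs, hmx⟩ := Finset.mem_filter.mp hx
    obtain ⟨hfx, hmfx⟩ := hmaps x hxs hmx
    exact Finset.mem_filter.mpr ⟨hfx, hmfx ▸ hmx⟩
  have hbij : Set.BijOn f S S :=
    (S.finite_toSet.injOn_iff_bijOn_of_mapsTo hmapsTo).mp (hS ▸ hf)
  rw [← hsupp, ← hsupp]
  refine Finset.prod_nbij f hmapsTo hbij.injOn hbij.surjOn fun x hx => ?_
  obtain ⟨hxs, hmx⟩ := Finset.mem_filter.mp hx
  rw [(hmaps x hxs hmx).2]

section RootSystem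

variable {V : Type*} [NormedAddCommGroup V] [InnerProductSpace ℝ V]

theorem inner_pos_of_natCast_mul_inner_self_eq {α lam : V} {n : ℕ} (hα : α ≠ 0) (hn : n ≠ 0)
    (hm : (n : ℝ) * ⟪α, α⟫ = 2 * ⟪α, lam⟫) : 0 < ⟪α, lam⟫ := by
  have : 0 < (n : ℝ) * ⟪α, α⟫ :=
    mul_pos (Nat.cast_pos.mpr (Nat.pos_of_ne_zero hn)) (real_inner_self_pos.mpr hα)
  linarith

theorem mem_of_inner_pos {R Rpos : Set V} {lam β : V} (hcover : R = Rpos ∪ (fun β => -β) '' Rpos)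
    (hdom : ∀ β ∈ Rpos, 0 ≤ ⟪β, lam⟫) (hβ : β ∈ R) (hpos : 0 < ⟪β, lam⟫) : β ∈ Rpos := by
  rw [hcover] at hβ
  rcases hβ with hβ | ⟨γ, hγ, rfl⟩
  · exact hβ
  · rw [inner_neg_left] at hpos
    linarith [hdom γ hγ]

theorem LinearIsometry.inner_map_left_of_map_eq_self (w : V →ₗᵢ[ℝ] V) {lam : V}
    (hwlam : w lam = lam) (a : V) : ⟪w a, lam⟫ = ⟪a, lam⟫ := by
  simpa [hwlam] using w.inner_map_map a lam

end RootSystem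

theorem stmt_1_general {V : Type*} [NormedAddCommGroup V] [InnerProductSpace ℝ V]
    {M : Type*} [CommMonoid M]
    (R Rpos : Finset V) (hR0 : ∀ α ∈ R, α ≠ 0)
    (hcover : (R : Set V) = (Rpos : Set V) ∪ (fun β => -β) '' (Rpos : Set V))
    (lam : V) (hdom : ∀ β ∈ Rpos, 0 ≤ ⟪β, lam⟫)
    (m : V → ℕ) (hm : ∀ α ∈ Rpos, (m α : ℝ) * ⟪α, α⟫ = 2 * ⟪α, lam⟫)
    (w : V →ₗᵢ[ℝ] V) (hwR : ⇑w '' (R : Set V) = (R : Set V)) (hwlam : w lam = lam)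
    (q : V → M) :
    ∏ α ∈ Rpos, q (w α) ^ m α = ∏ α ∈ Rpos, q α ^ m α := by
  refine Finset.prod_comp_pow_eq_of_mapsTo _ _ _ _ w.injective.injOn fun α hα hmα => ?_
  have hαR : α ∈ R := Finset.mem_coe.mp (hcover ▸ Or.inl hα)
  have hα0 := hR0 α hαR
  have hpos := inner_pos_of_natCast_mul_inner_self_eq hα0 hmα (hm α hα)
  have hwα : w α ∈ Rpos := mem_of_inner_pos hcover hdom (hwR ▸ Set.mem_image_of_mem w hαR)
    (by rwa [w.inner_map_left_of_map_eq_self hwlam])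
  refine ⟨hwα, Nat.cast_injective (R := ℝ) (mul_right_cancel₀ (real_inner_self_pos.mpr hα0).ne' ?_)⟩
  have hmwα := hm _ hwα
  rw [w.inner_map_map, w.inner_map_left_of_map_eq_self hwlam] at hmwα
  rw [hmwα, hm α hα]

/-- Well-definedness of the products `p_k`: the product
`∏_{α ∈ R⁺} q(α)^{m(α)}` is unchanged when the positive roots are replaced by
their images under an isometry `w` stabilizing `R` and the dominant weight `λ`. -/
theorem stmt_1 {V : Type*} [NormedAddCommGroup V] [InnerProductSpace ℝ V]
    [FiniteDimensional ℝ V] {M : Type*} [CommMonoid M]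
    (R Rpos : Finset V) (hR0 : ∀ α ∈ R, α ≠ 0)
    (hsub : Rpos ⊆ R)
    (hcover : (R : Set V) = (Rpos : Set V) ∪ (fun β => -β) '' (Rpos : Set V))
    (hdisj : Disjoint (Rpos : Set V) ((fun β => -β) '' (Rpos : Set V)))
    (lam : V) (hdom : ∀ β ∈ Rpos, 0 ≤ ⟪β, lam⟫)
    (m : V → ℕ) (hm : ∀ α ∈ Rpos, (m α : ℝ) * ⟪α, α⟫ = 2 * ⟪α, lam⟫)
    (w : V →ₗᵢ[ℝ] V) (hwR : ⇑w '' (R : Set V) = (R : Set V)) (hwlam : w lam = lam)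
    (q : V → M) :
    ∏ α ∈ Rpos, q (w α) ^ m α = ∏ α ∈ Rpos, q α ^ m α :=
  stmt_1_general R Rpos hR0 hcover lam hdom m hm w hwR hwlam q
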